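/- arXiv:1810.03133 — 5 statements merged into one kernel-verified Lean document; each statement's English description precedes it below -/
import Mathlib

section
/- Let d be a semi-metric on X with no infinitely remote point, and ω ∈ X. Then the metric inversion d_ω(x,y) = d(x,y)/(d(x,ω)d(y,ω)) (with d_ω(x,ω)=∞ for x≠ω) is a semi-metric on X with infinitely remote point ω, and d_ω is Möbius equivalent to d, i.e., has the same cross-ratios on all nondegenerate 4-tuples of points distinct from ω. -/
open scoped ENNReal Classical

/-- A cross-ratio is unchanged when every distance `d v w` is divided by `f v * f w`: each factor
`f v` occurs once in the numerator and once in the denominator. -/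
theorem div_mul_div_div_div_mul_div {K : Type*} [Field K] (p q r s a b c e : K)
    (ha : a ≠ 0) (hb : b ≠ 0) (hc : c ≠ 0) (he : e ≠ 0) :
    p / (a * c) * (q / (b * e)) / (r / (a * e) * (s / (b * c))) = p * q / (r * s) := by
  field_simp

theorem ENNReal.ofReal_mul_ofReal_div_ofReal_mul_ofReal {a b c e : ℝ} (ha : 0 ≤ a)
    (hc : 0 ≤ c) (hce : 0 < c * e) :
    ENNReal.ofReal a * ENNReal.ofReal b / (ENNReal.ofReal c * ENNReal.ofReal e) =
      ENNReal.ofReal (a * b / (c * e)) := by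
  rw [← ENNReal.ofReal_mul ha, ← ENNReal.ofReal_mul hc, ENNReal.ofReal_div_of_pos hce]

noncomputable def metricInversion {X : Type*} (d : X → X → ℝ) (ω x y : X) : ℝ≥0∞ :=
  if x = y then 0
  else if x = ω ∨ y = ω then ⊤
  else ENNReal.ofReal (d x y / (d x ω * d y ω))

namespace metricInversion

variable {X : Type*} {d : X → X → ℝ} {ω : X}

theorem comm (hsymm : ∀ x y, d x y = d y x) (x y : X) :
    metricInversion d ω x y = metricInversion d ω y x := by
  unfold metricInversion
  simp only [@eq_comm _ x y, @or_comm (x = ω), hsymm x y, mul_comm (d x ω)]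

theorem of_ne {x y : X} (hxy : x ≠ y) (hx : x ≠ ω) (hy : y ≠ ω) :
    metricInversion d ω x y = ENNReal.ofReal (d x y / (d x ω * d y ω)) := by
  simp [metricInversion, hxy, hx, hy]

theorem eq_top_iff {x y : X} : metricInversion d ω x y = ⊤ ↔ x ≠ y ∧ (x = ω ∨ y = ω) := by
  unfold metricInversion
  split_ifs <;> simp_all

theorem inverted_pos (hpos : ∀ x y, x ≠ y → 0 < d x y) {x y : X} (hxy : x ≠ y) (hx : x ≠ ω)
    (hy : y ≠ ω) : 0 < d x y / (d x ω * d y ω) :=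
  div_pos (hpos x y hxy) (mul_pos (hpos x ω hx) (hpos y ω hy))

theorem eq_zero_iff (hpos : ∀ x y, x ≠ y → 0 < d x y) {x y : X} :
    metricInversion d ω x y = 0 ↔ x = y := by
  refine ⟨fun h => ?_, fun h => by simp [metricInversion, h]⟩
  by_contra hxy
  by_cases hω : x = ω ∨ y = ω
  · simp [eq_top_iff.2 ⟨hxy, hω⟩] at h
  rw [not_or] at hω
  rw [of_ne hxy hω.1 hω.2, ENNReal.ofReal_eq_zero, ← not_lt] at h
  exact h (inverted_pos hpos hxy hω.1 hω.2)

theorem crossRatio_eq (hpos : ∀ x y, x ≠ y → 0 < d x y) {x y z u : X} (hxz : x ≠ z)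
    (hxu : x ≠ u) (hyz : y ≠ z) (hyu : y ≠ u) (hx : x ≠ ω) (hy : y ≠ ω) (hz : z ≠ ω) (hu : u ≠ ω) :
    metricInversion d ω x z * metricInversion d ω y u /
        (metricInversion d ω x u * metricInversion d ω y z) =
      ENNReal.ofReal (d x z * d y u / (d x u * d y z)) := by
  have hω {v : X} (hv : v ≠ ω) : d v ω ≠ 0 := (hpos v ω hv).ne'
  have hinv {v w : X} (hvw : v ≠ w) (hv : v ≠ ω) (hw : w ≠ ω) := inverted_pos hpos hvw hv hw
  rw [of_ne hxz hx hz, of_ne hyu hy hu, of_ne hxu hx hu, of_ne hyz hy hz,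
    ENNReal.ofReal_mul_ofReal_div_ofReal_mul_ofReal (hinv hxz hx hz).le (hinv hxu hx hu).le
      (mul_pos (hinv hxu hx hu) (hinv hyz hy hz)),
    div_mul_div_div_div_mul_div _ _ _ _ _ _ _ _ (hω hx) (hω hy) (hω hz) (hω hu)]

end metricInversion

theorem stmt1_general {X : Type*} (d : X → X → ℝ)
    (hsymm : ∀ x y, d x y = d y x)
    (hpos : ∀ x y, x ≠ y → 0 < d x y)
    (ω : X) (dω : X → X → ℝ≥0∞)
    (hdω : ∀ x y, dω x y =
      if x = y then 0
      else if x = ω ∨ y = ω then ⊤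
      else ENNReal.ofReal (d x y / (d x ω * d y ω))) :
    -- `d_ω` is a semi-metric ...
    (∀ x y, dω x y = dω y x) ∧
    (∀ x y, dω x y = 0 ↔ x = y) ∧
    -- ... with infinitely remote point `ω` (and no other infinite values):
    (∀ x, x ≠ ω → dω x ω = ⊤) ∧
    (∀ x y, dω x y = ⊤ → x = ω ∨ y = ω) ∧
    -- and `d_ω` is Möbius equivalent to `d`:
    (∀ x y z u : X, x ≠ y → x ≠ z → x ≠ u → y ≠ z → y ≠ u → z ≠ u →
      x ≠ ω → y ≠ ω → z ≠ ω → u ≠ ω →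
      (dω x z * dω y u) / (dω x u * dω y z) =
        ENNReal.ofReal ((d x z * d y u) / (d x u * d y z))) := by
  obtain rfl : dω = metricInversion d ω := funext₂ hdω
  refine ⟨metricInversion.comm hsymm, fun _ _ => metricInversion.eq_zero_iff hpos,
    fun x hx => metricInversion.eq_top_iff.2 ⟨hx, .inr rfl⟩,
    fun _ _ h => (metricInversion.eq_top_iff.1 h).2,
    fun _ _ _ _ _ hxz hxu hyz hyu _ hx hy hz hu =>
      metricInversion.crossRatio_eq hpos hxz hxu hyz hyu hx hy hz hu⟩

/-- Let `d` be a semi-metric on `X` with no infinitely remote point (so `d`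
is finite-valued), and `ω ∈ X`. Then the metric inversion
`d_ω(x,y) = d(x,y)/(d(x,ω)d(y,ω))` (with `d_ω(x,ω) = ∞` for `x ≠ ω`) is a semi-metric on `X`
with infinitely remote point `ω`, and `d_ω` is Möbius equivalent to `d`: it has the same
cross-ratios on all nondegenerate 4-tuples of points distinct from `ω`. -/
theorem stmt1 {X : Type*} (d : X → X → ℝ)
    (hsymm : ∀ x y, d x y = d y x)
    (hrefl : ∀ x, d x x = 0)
    (hpos : ∀ x y, x ≠ y → 0 < d x y)
    (ω : X) (dω : X → X → ℝ≥0∞)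
    (hdω : ∀ x y, dω x y =
      if x = y then 0
      else if x = ω ∨ y = ω then ⊤
      else ENNReal.ofReal (d x y / (d x ω * d y ω))) :
    -- `d_ω` is a semi-metric ...
    (∀ x y, dω x y = dω y x) ∧
    (∀ x y, dω x y = 0 ↔ x = y) ∧
    -- ... with infinitely remote point `ω` (and no other infinite values):
    (∀ x, x ≠ ω → dω x ω = ⊤) ∧
    (∀ x y, dω x y = ⊤ → x = ω ∨ y = ω) ∧
    -- and `d_ω` is Möbius equivalent to `d`:
    (∀ x y z u : X, x ≠ y → x ≠ z → x ≠ u → y ≠ z → y ≠ u → z ≠ u →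
      x ≠ ω → y ≠ ω → z ≠ ω → u ≠ ω →
      (dω x z * dω y u) / (dω x u * dω y z) =
        ENNReal.ofReal ((d x z * d y u) / (d x u * d y z))) :=
  stmt1_general d hsymm hpos ω dω hdω
end

section
/- Let M be a monotone Möbius structure on S¹. For every nondegenerate 4-tuple q, M(q) ≠ (0,0,0); equivalently, there is no 4-tuple of distinct points (x,y,z,u) and semi-metric of M with infinitely remote point u satisfying |xy|_u = |xz|_u = |yz|_u. -/
open scoped Classical

section Mobius

variable {X : Type*}

/-- The pairs `(x,y)` and `(z,u)` separate each other on the circularly ordered set `X`: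
`z` and `u` lie on different open arcs determined by `x` and `y`. -/
def PairSeparates [CircularOrder X] (x y z u : X) : Prop :=
  (sbtw x z y ∧ sbtw y u x) ∨ (sbtw x u y ∧ sbtw y z x)

/-- The pair `(d₁,d₂)` separates the pairs `(b₁,b₂)` and `(c₁,c₂)`: the latter two pairs lie
on different open arcs determined by `(d₁,d₂)`. -/
def ArcSepPairs [CircularOrder X] (d₁ d₂ b₁ b₂ c₁ c₂ : X) : Prop :=
  (sbtw d₁ b₁ d₂ ∧ sbtw d₁ b₂ d₂ ∧ sbtw d₂ c₁ d₁ ∧ sbtw d₂ c₂ d₁) ∨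
  (sbtw d₁ c₁ d₂ ∧ sbtw d₁ c₂ d₂ ∧ sbtw d₂ b₁ d₁ ∧ sbtw d₂ b₂ d₁)

/-- Two pairs `(b₁,b₂)` and `(c₁,c₂)` of points are in the strong causal relation:
either of them lies entirely in one open arc determined by the other. -/
def StrongCausal [CircularOrder X] (b₁ b₂ c₁ c₂ : X) : Prop :=
  (sbtw b₁ c₁ b₂ ∧ sbtw b₁ c₂ b₂) ∨ (sbtw b₂ c₁ b₁ ∧ sbtw b₂ c₂ b₁) ∨
  (sbtw c₁ b₁ c₂ ∧ sbtw c₁ b₂ c₂) ∨ (sbtw c₂ b₁ c₁ ∧ sbtw c₂ b₂ c₁)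

/-- The topology generated by open balls of the semi-metrics with infinitely remote points,
centered at finite points. `D ω x y` denotes `|xy|` in the semi-metric with infinitely remote
point `ω`. -/
def MTopology (D : X → X → X → ℝ) : TopologicalSpace X :=
  TopologicalSpace.generateFrom
    {s | ∃ ω x r, x ≠ ω ∧ s = {y | y ≠ ω ∧ D ω x y < r}}

/-- A (ptolemaic) monotone Möbius structure on a circle `X`, presented by the family of its
semi-metrics with infinitely remote points: `D ω x y` is the distance `|xy|_ω` in the
semi-metric with infinitely remote point `ω` (defined for `x, y ≠ ω`).  The semi-metrics
are pairwise related by metric inversion (up to homothety), every one of them satisfies the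
Ptolemy inequality, the monotonicity axiom (M) holds, the M-topology is the given topology
of `X`, and `X` is homeomorphic to the circle. -/
structure MonotoneMobius (X : Type*) [CircularOrder X] [t : TopologicalSpace X] where
  D : X → X → X → ℝ
  symm : ∀ ω x y, D ω x y = D ω y x
  refl : ∀ ω x, D ω x x = 0
  pos : ∀ ω x y, x ≠ y → x ≠ ω → y ≠ ω → 0 < D ω x y
  inversion : ∀ ω ω', ω ≠ ω' → ∃ c : ℝ, 0 < c ∧ ∀ x y, x ≠ ω → y ≠ ω → x ≠ ω' → y ≠ ω' →
    D ω' x y = c * D ω x y / (D ω x ω' * D ω y ω')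
  ptolemy : ∀ ω x y z u, x ≠ ω → y ≠ ω → z ≠ ω → u ≠ ω →
    D ω x y * D ω z u ≤ D ω x z * D ω y u + D ω x u * D ω y z
  mono : ∀ ω x y z u, x ≠ ω → y ≠ ω → z ≠ ω → u ≠ ω → PairSeparates x y z u →
    D ω x z * D ω y u < D ω x y * D ω z u ∧ D ω x u * D ω y z < D ω x y * D ω z u
  mtop : MTopology D = t
  circle : Nonempty (X ≃ₜ AddCircle (1 : ℝ))

variable [CircularOrder X] [TopologicalSpace X]

/-- The 4-tuple `(x,y,z,u)` is harmonic (of the first type): `|xz||yu| = |xu||yz|` in any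
semi-metric of the Möbius structure. -/
def MonotoneMobius.Harmonic (M : MonotoneMobius X) (x y z u : X) : Prop :=
  ∀ ω, ω ≠ x → ω ≠ y → ω ≠ z → ω ≠ u →
    M.D ω x z * M.D ω y u = M.D ω x u * M.D ω y z

/-- The distance `|q q'| = |ln ((|xp'||yp|)/(|xp||yp'|))|` between two harmonic pairs
`q = ((x,y),(p,·))` and `q' = ((x,y),(p',·))` with common axis `(x,y)`; computed here in the
semi-metric with infinitely remote point `x`, where it equals `|ln (|yp|_x / |yp'|_x)|`. -/
noncomputable def MonotoneMobius.lineDist (M : MonotoneMobius X) (x y p p' : X) : ℝ :=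
  |Real.log (M.D x y p / M.D x y p')|

end Mobius

/-! Choose a fifth point `ω`. Metric inversion turns `|xy|_u = |xz|_u = |yz|_u` into the equality
of the three cross products `|xy||zu|`, `|xz||yu|`, `|xu||yz|` in the semi-metric `|··|_ω`. But one of
the pairings `{x,y},{z,u}`, `{x,z},{y,u}`, `{x,u},{y,z}` separates, and by monotonicity its cross
product strictly exceeds the other two. -/

section CircularOrder

variable {α : Type*} [CircularOrder α]

lemma sbtw_or_sbtw_of_ne {a b c : α} (hab : a ≠ b) (hbc : b ≠ c) (hca : c ≠ a) :
    sbtw a b c ∨ sbtw a c b := by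
  rcases btw_total a b c with h | h
  · refine .inl (sbtw_of_btw_not_btw h fun h' => ?_)
    rcases h.antisymm h' with rfl | rfl | rfl <;> contradiction
  · refine .inr (sbtw_cyclic_right (sbtw_of_btw_not_btw h fun h' => ?_))
    rcases h.antisymm h' with rfl | rfl | rfl <;> contradiction

lemma pairSeparates_trichotomy_of_sbtw {x y z u : α} (hxyz : sbtw x y z)
    (hxu : x ≠ u) (hyu : y ≠ u) (hzu : z ≠ u) :
    PairSeparates x y z u ∨ PairSeparates x z y u ∨ PairSeparates x u y z := by
  have hxy : x ≠ y := by rintro rfl; exact sbtw_irrefl_left hxyz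
  have hyz : y ≠ z := by rintro rfl; exact sbtw_irrefl_right hxyz
  rcases sbtw_or_sbtw_of_ne hxu hyu.symm hxy.symm with hxuy | hxyu
  · exact .inl (.inr ⟨hxuy, sbtw_cyclic_left hxyz⟩)
  rcases sbtw_or_sbtw_of_ne hyu hzu.symm hyz.symm with hyuz | hyzu
  · exact .inr (.inr (.inl ⟨hxyu, sbtw_cyclic_left (hxyz.trans_left hyuz)⟩))
  · exact .inr (.inl (.inl ⟨hxyz, sbtw_cyclic_left (hxyu.trans_left hyzu)⟩))

lemma pairSeparates_trichotomy {x y z u : α} (hxy : x ≠ y) (hxz : x ≠ z) (hxu : x ≠ u)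
    (hyz : y ≠ z) (hyu : y ≠ u) (hzu : z ≠ u) :
    PairSeparates x y z u ∨ PairSeparates x z y u ∨ PairSeparates x u y z := by
  rcases sbtw_or_sbtw_of_ne hxy hyz hxz.symm with hxyz | hxzy
  · exact pairSeparates_trichotomy_of_sbtw hxyz hxu hyu hzu
  · rcases pairSeparates_trichotomy_of_sbtw hxzy hxu hzu hyu with h | h | h
    · exact .inr (.inl h)
    · exact .inl h
    · exact .inr (.inr (Or.symm h))

end CircularOrder

namespace MonotoneMobius

variable {X : Type*} [CircularOrder X] [TopologicalSpace X] (M : MonotoneMobius X)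

lemma infinite (M : MonotoneMobius X) : Infinite X :=
  have : Infinite (AddCircle (1 : ℝ)) :=
    (AddCircle.equivIco 1 0).infinite_iff.mpr (Set.Ico_infinite (by norm_num)).to_subtype
  M.circle.some.toEquiv.infinite_iff.mpr this

lemma dist_eq_dist_iff_cross_mul_eq {ω u a b b' : X} (hωu : ω ≠ u) (ha : a ≠ ω) (hb : b ≠ ω)
    (hb' : b' ≠ ω) (hau : a ≠ u) (hbu : b ≠ u) (hb'u : b' ≠ u) :
    M.D u a b = M.D u a b' ↔ M.D ω a b * M.D ω b' u = M.D ω a b' * M.D ω b u := by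
  obtain ⟨c, hc, hinv⟩ := M.inversion ω u hωu
  have hau₀ := M.pos ω a u hau ha hωu.symm
  have hbu₀ := M.pos ω b u hbu hb hωu.symm
  have hb'u₀ := M.pos ω b' u hb'u hb' hωu.symm
  rw [hinv a b ha hb hau hbu, hinv a b' ha hb' hau hb'u,
    div_eq_div_iff (by positivity) (by positivity)]
  constructor
  · intro h
    exact mul_left_cancel₀ (mul_ne_zero hc.ne' hau₀.ne') (by linear_combination h)
  · intro h
    linear_combination c * M.D ω a u * h

lemma cross_mul_not_all_eq {ω x y z u : X} (hxy : x ≠ y) (hxz : x ≠ z) (hxu : x ≠ u)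
    (hyz : y ≠ z) (hyu : y ≠ u) (hzu : z ≠ u)
    (hx : x ≠ ω) (hy : y ≠ ω) (hz : z ≠ ω) (hu : u ≠ ω) :
    ¬ (M.D ω x y * M.D ω z u = M.D ω x z * M.D ω y u ∧
      M.D ω x z * M.D ω y u = M.D ω x u * M.D ω y z) := by
  rintro ⟨h₁, h₂⟩
  rcases pairSeparates_trichotomy hxy hxz hxu hyz hyu hzu with hs | hs | hs
  · linarith [(M.mono ω x y z u hx hy hz hu hs).1]
  · linarith [(M.mono ω x z y u hx hz hy hu hs).1]
  · have := (M.mono ω x u y z hx hu hy hz hs).1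
    rw [M.symm ω u z] at this
    linarith

end MonotoneMobius

/-- Let `M` be a monotone Möbius structure on the circle. Then for every
nondegenerate 4-tuple `q = (x,y,z,u)`, `M(q) ≠ (0,0,0)`; equivalently, there is no 4-tuple of
distinct points `(x,y,z,u)` such that, in the semi-metric of `M` with infinitely remote point
`u`, `|xy|_u = |xz|_u = |yz|_u`. -/
theorem stmt5 {X : Type*} [CircularOrder X] [TopologicalSpace X]
    (M : MonotoneMobius X) (x y z u : X)
    (hxy : x ≠ y) (hxz : x ≠ z) (hxu : x ≠ u) (hyz : y ≠ z) (hyu : y ≠ u) (hzu : z ≠ u) :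
    ¬ (M.D u x y = M.D u x z ∧ M.D u x z = M.D u y z) := by
  rintro ⟨hxyz, hxzy⟩
  have := M.infinite
  obtain ⟨ω, hω⟩ := Infinite.exists_notMem_finset ({x, y, z, u} : Finset X)
  simp only [Finset.mem_insert, Finset.mem_singleton, not_or, eq_comm (a := ω)] at hω
  obtain ⟨hx, hy, hz, hu⟩ := hω
  refine M.cross_mul_not_all_eq hxy hxz hxu hyz hyu hzu hx hy hz hu ⟨?_, ?_⟩
  · exact (M.dist_eq_dist_iff_cross_mul_eq (Ne.symm hu) hx hy hz hxu hyu hzu).mp hxyz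
  · rw [M.symm u x z, M.symm u y z] at hxzy
    have := (M.dist_eq_dist_iff_cross_mul_eq (Ne.symm hu) hz hx hy hzu hxu hyu).mp hxzy
    rw [M.symm ω z x, M.symm ω z y] at this
    linarith
end

section
/- Let M be a monotone Möbius structure on S¹ and q=(x,y,z,u) a nondegenerate 4-tuple such that the arc xz ⊂ S¹ \ {u} (the arc with endpoints x,z not containing u) is contained in the arc xy ⊂ S¹ \ {u}. Then |xz|_u < |xy|_u for the semi-metric of M with infinitely remote point u. -/
open scoped Classical

/-- Let `M` be a monotone Möbius structure on the circle and `(x,y,z,u)` a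
nondegenerate 4-tuple such that the arc `xz ⊂ S¹ \ {u}` (the arc with endpoints `x,z` not
containing `u`) is contained in the arc `xy ⊂ S¹ \ {u}`; i.e. `z` lies on the arc with
endpoints `x,y` not containing `u`. Then `|xz|_u < |xy|_u` in the semi-metric of `M` with
infinitely remote point `u`. -/
theorem stmt6 {X : Type*} [CircularOrder X] [TopologicalSpace X]
    (M : MonotoneMobius X) (x y z u : X)
    (hxy : x ≠ y) (hxz : x ≠ z) (hxu : x ≠ u) (hyz : y ≠ z) (hyu : y ≠ u) (hzu : z ≠ u)
    (harc : (sbtw x z y ∧ sbtw y u x) ∨ (sbtw y z x ∧ sbtw x u y)) :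
    M.D u x z < M.D u x y := by

  -- X is infinite via the homeomorphism to the circle
  obtain ⟨e⟩ := M.circle
  haveI : Fact ((0:ℝ) < 0 + 1) := ⟨by norm_num⟩
  haveI : Infinite (Set.Ioc (0:ℝ) (0 + 1)) := Set.Ioc.infinite (by norm_num)
  haveI : Infinite (AddCircle (1:ℝ)) :=
    Infinite.of_injective (AddCircle.equivIoc (1:ℝ) 0).symm
      (AddCircle.equivIoc (1:ℝ) 0).symm.injective
  haveI : Infinite X := Infinite.of_injective e.symm e.symm.injective
  obtain ⟨ω, hω⟩ := Infinite.exists_notMem_finset ({x, y, z, u} : Finset X)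
  simp only [Finset.mem_insert, Finset.mem_singleton, not_or] at hω
  obtain ⟨hωx, hωy, hωz, hωu⟩ := hω
  have hx : x ≠ ω := fun h => hωx h.symm
  have hy : y ≠ ω := fun h => hωy h.symm
  have hz : z ≠ ω := fun h => hωz h.symm
  have hu : u ≠ ω := fun h => hωu h.symm
  have hsep : PairSeparates x y z u := by
    rcases harc with ⟨h1, h2⟩ | ⟨h1, h2⟩
    · exact Or.inl ⟨h1, h2⟩
    · exact Or.inr ⟨h2, h1⟩
  have hmono := (M.mono ω x y z u hx hy hz hu hsep).1
  obtain ⟨c, hc, hrel⟩ := M.inversion ω u hωu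
  have e1 := hrel x z hx hz hxu hzu
  have e2 := hrel x y hx hy hxu hyu
  have pxz := M.pos ω x z hxz hx hz
  have pxy := M.pos ω x y hxy hx hy
  have pyu := M.pos ω y u hyu hy hu
  have pzu := M.pos ω z u hzu hz hu
  have pxu := M.pos ω x u hxu hx hu
  rw [e1, e2, div_lt_div_iff₀ (by positivity) (by positivity)]
  nlinarith [mul_pos pxu hc, mul_pos (mul_pos pxu hc) pxz,
    mul_pos (mul_pos pxu hc) pxy]
end

section
/- Let M be a monotone Möbius structure on S¹, and let q=(a,b), q'=(a,b') be distinct harmonic pairs on a common left line lh_a (i.e., (a,b) and (a,b') are harmonic with a=(x,y), b=(z,u), b'=(z',u')). Then b and b' are in the strong causal relation: one of them lies in an open arc of S¹ determined by the other. -/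
open scoped Classical

section StmtNineAux

variable {X : Type*} [CircularOrder X]

private lemma sc_ne12 {a b c : X} (h : sbtw a b c) : a ≠ b := by
  rintro rfl; exact sbtw_irrefl_left h

private lemma sc_ne23 {a b c : X} (h : sbtw a b c) : b ≠ c := by
  rintro rfl; exact sbtw_irrefl_right h

private lemma sc_ne13 {a b c : X} (h : sbtw a b c) : a ≠ c := by
  rintro rfl; exact sbtw_irrefl_left_right h

/-- Dichotomy: two points distinct from `a` and from each other are in one of the two
possible circular orders relative to `a`. -/
private lemma sc_dich {a p q : X} (hap : a ≠ p) (haq : a ≠ q) (hpq : p ≠ q) :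
    sbtw a p q ∨ sbtw a q p := by
  rcases btw_total a p q with h | h
  · by_cases h' : btw q p a
    · rcases btw_antisymm h h' with h'' | h'' | h''
      · exact absurd h'' hap
      · exact absurd h'' hpq
      · exact absurd h''.symm haq
    · exact Or.inl (h.sbtw_of_not_btw h')
  · by_cases h' : btw p q a
    · rcases btw_antisymm h.cyclic_right h' with h'' | h'' | h''
      · exact absurd h'' haq
      · exact absurd h''.symm hpq
      · exact absurd h''.symm hap
    · exact Or.inr (h.cyclic_right.sbtw_of_not_btw h')

/-- Cutting the circle at `w`: three points in increasing cut-order are in circular order. -/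
private lemma sc_cut3 {w a b c : X} (h1 : sbtw w a b) (h2 : sbtw w b c) : sbtw a b c :=
  (h2.cyclic_right.trans_left h1).cyclic_left

private lemma sc_swap34 {b₁ b₂ c₁ c₂ : X} (h : StrongCausal b₁ b₂ c₂ c₁) :
    StrongCausal b₁ b₂ c₁ c₂ := by
  unfold StrongCausal at h ⊢; tauto

private lemma sc_swap12 {b₁ b₂ c₁ c₂ : X} (h : StrongCausal b₂ b₁ c₁ c₂) :
    StrongCausal b₁ b₂ c₁ c₂ := by
  unfold StrongCausal at h ⊢; tauto

variable [TopologicalSpace X]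

/-- The auxiliary function `p ↦ |xp|/|yp|` in the semi-metric with infinitely remote point
`ω`. -/
private noncomputable def scF (M : MonotoneMobius X) (ω x y p : X) : ℝ :=
  M.D ω x p / M.D ω y p

/-- `scF` is strictly increasing along the arc from `x` to `y`. -/
private lemma scF_ltA (M : MonotoneMobius X) {ω x y p q : X}
    (hxω : x ≠ ω) (hyω : y ≠ ω) (hpω : p ≠ ω) (hqω : q ≠ ω) (hpy : p ≠ y) (hqy : q ≠ y)
    (h1 : sbtw x p q) (h2 : sbtw x q y) :
    scF M ω x y p < scF M ω x y q := by
  have hsep : PairSeparates x q p y := Or.inl ⟨h1, h2.cyclic_left⟩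
  have hm := (M.mono ω x q p y hxω hqω hpω hyω hsep).1
  have h1' : (0:ℝ) < M.D ω y p := M.pos ω y p (Ne.symm hpy) hyω hpω
  have h2' : (0:ℝ) < M.D ω y q := M.pos ω y q (Ne.symm hqy) hyω hqω
  rw [scF, scF, div_lt_div_iff₀ h1' h2']
  rwa [M.symm ω q y, M.symm ω p y] at hm

/-- `scF` is strictly decreasing along the arc from `y` to `x`. -/
private lemma scF_ltB (M : MonotoneMobius X) {ω x y p q : X}
    (hxω : x ≠ ω) (hyω : y ≠ ω) (hpω : p ≠ ω) (hqω : q ≠ ω) (hpy : p ≠ y) (hqy : q ≠ y)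
    (h1 : sbtw x y p) (h2 : sbtw x p q) :
    scF M ω x y q < scF M ω x y p := by
  have hsep : PairSeparates y q p x := Or.inl ⟨sc_cut3 h1 h2, (h1.trans_right h2).cyclic_right⟩
  have hm := (M.mono ω y q p x hyω hqω hpω hxω hsep).1
  have h1' : (0:ℝ) < M.D ω y q := M.pos ω y q (Ne.symm hqy) hyω hqω
  have h2' : (0:ℝ) < M.D ω y p := M.pos ω y p (Ne.symm hpy) hyω hpω
  rw [scF, scF, div_lt_div_iff₀ h1' h2']
  rw [M.symm ω q x, M.symm ω p x] at hm
  rw [mul_comm (M.D ω y p) (M.D ω x q), mul_comm (M.D ω y q) (M.D ω x p)] at hm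
  exact hm

/-- Harmonicity of `(x,y,z,u)` means `scF z = scF u`. -/
private lemma scF_eq (M : MonotoneMobius X) {ω x y z u : X}
    (hωx : ω ≠ x) (hωy : ω ≠ y) (hωz : ω ≠ z) (hωu : ω ≠ u) (hyz : y ≠ z) (hyu : y ≠ u)
    (hb : M.Harmonic x y z u) : scF M ω x y z = scF M ω x y u := by
  have hm := hb ω hωx hωy hωz hωu
  rw [scF, scF, div_eq_div_iff (M.pos ω y z hyz hωy.symm hωz.symm).ne'
    (M.pos ω y u hyu hωy.symm hωu.symm).ne']
  exact hm

/-- A harmonic pair `(z,u)` is separated by the axis `(x,y)`. -/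
private lemma scF_sep (M : MonotoneMobius X) {ω x y z u : X}
    (hωx : ω ≠ x) (hωy : ω ≠ y) (hωz : ω ≠ z) (hωu : ω ≠ u)
    (hxy : x ≠ y) (hxz : x ≠ z) (hxu : x ≠ u) (hyz : y ≠ z) (hyu : y ≠ u) (hzu : z ≠ u)
    (hf : scF M ω x y z = scF M ω x y u) :
    (sbtw x z y ∧ sbtw x y u) ∨ (sbtw x u y ∧ sbtw x y z) := by
  have dz : sbtw x z y ∨ sbtw x y z := sc_dich hxz hxy hyz.symm
  have du : sbtw x u y ∨ sbtw x y u := sc_dich hxu hxy hyu.symm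
  rcases dz with hz | hz <;> rcases du with hu | hu
  · exfalso
    rcases sc_dich hxz hxu hzu with h | h
    · have := scF_ltA M hωx.symm hωy.symm hωz.symm hωu.symm hyz.symm hyu.symm h hu
      linarith
    · have := scF_ltA M hωx.symm hωy.symm hωu.symm hωz.symm hyu.symm hyz.symm h hz
      linarith
  · exact Or.inl ⟨hz, hu⟩
  · exact Or.inr ⟨hu, hz⟩
  · exfalso
    rcases sc_dich hxz hxu hzu with h | h
    · have := scF_ltB M hωx.symm hωy.symm hωz.symm hωu.symm hyz.symm hyu.symm hz h
      linarith
    · have := scF_ltB M hωx.symm hωy.symm hωu.symm hωz.symm hyu.symm hyz.symm hu h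
      linarith

/-- Key lemma: two harmonic pairs in normalized position are strongly causally related. -/
private lemma scF_key (M : MonotoneMobius X) {ω x y z u z' u' : X}
    (hωx : ω ≠ x) (hωy : ω ≠ y) (hωz : ω ≠ z) (hωu : ω ≠ u) (hωz' : ω ≠ z') (hωu' : ω ≠ u')
    (hz : sbtw x z y) (hu : sbtw x y u) (hz' : sbtw x z' y) (hu' : sbtw x y u')
    (hf : scF M ω x y z = scF M ω x y u) (hf' : scF M ω x y z' = scF M ω x y u')
    (hne : ¬(z = z' ∧ u = u')) :
    StrongCausal z u z' u' := by
  have hxz : x ≠ z := sc_ne12 hz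
  have hxz' : x ≠ z' := sc_ne12 hz'
  have hzy : z ≠ y := sc_ne23 hz
  have hz'y : z' ≠ y := sc_ne23 hz'
  have hxu : x ≠ u := sc_ne13 hu
  have hxu' : x ≠ u' := sc_ne13 hu'
  have huy : u ≠ y := (sc_ne23 hu).symm
  have hu'y : u' ≠ y := (sc_ne23 hu').symm
  by_cases hzz : z = z'
  · subst hzz
    have huu : u ≠ u' := fun h => hne ⟨rfl, h⟩
    exfalso
    rcases sc_dich hxu hxu' huu with h | h
    · have := scF_ltB M hωx.symm hωy.symm hωu.symm hωu'.symm huy hu'y hu h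
      linarith
    · have := scF_ltB M hωx.symm hωy.symm hωu'.symm hωu.symm hu'y huy hu' h
      linarith
  · by_cases huu : u = u'
    · subst huu
      exfalso
      rcases sc_dich hxz hxz' hzz with h | h
      · have := scF_ltA M hωx.symm hωy.symm hωz.symm hωz'.symm hzy hz'y h hz'
        linarith
      · have := scF_ltA M hωx.symm hωy.symm hωz'.symm hωz.symm hz'y hzy h hz
        linarith
    · rcases sc_dich hxz hxz' hzz with hA | hA <;> rcases sc_dich hxu hxu' huu with hB | hB
      · exfalso
        have h1 := scF_ltA M hωx.symm hωy.symm hωz.symm hωz'.symm hzy hz'y hA hz'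
        have h2 := scF_ltB M hωx.symm hωy.symm hωu.symm hωu'.symm huy hu'y hu hB
        linarith
      · exact Or.inl ⟨sc_cut3 hA (hz'.trans_right hu), sc_cut3 (hz.trans_right hu') hB⟩
      · exact Or.inr (Or.inr (Or.inl
          ⟨sc_cut3 hA (hz.trans_right hu'), sc_cut3 (hz'.trans_right hu) hB⟩))
      · exfalso
        have h1 := scF_ltA M hωx.symm hωy.symm hωz'.symm hωz.symm hz'y hzy hA hz
        have h2 := scF_ltB M hωx.symm hωy.symm hωu'.symm hωu.symm hu'y huy hu' hB
        linarith

end StmtNineAux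

/-- Let `M` be a monotone Möbius structure on the circle and let
`q = (a,b)`, `q' = (a,b')` be distinct harmonic pairs on a common left line `lh_a`, where
`a = (x,y)`, `b = (z,u)`, `b' = (z',u')`. Then `b` and `b'` are in the strong causal
relation: one of them lies in an open arc of the circle determined by the other. -/
theorem stmt9 {X : Type*} [CircularOrder X] [TopologicalSpace X]
    (M : MonotoneMobius X) (x y z u z' u' : X)
    (hxy : x ≠ y) (hxz : x ≠ z) (hxu : x ≠ u) (hyz : y ≠ z) (hyu : y ≠ u) (hzu : z ≠ u)
    (hxz' : x ≠ z') (hxu' : x ≠ u') (hyz' : y ≠ z') (hyu' : y ≠ u') (hzu' : z' ≠ u')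
    (hb : M.Harmonic x y z u) (hb' : M.Harmonic x y z' u')
    (hne : ({z, u} : Set X) ≠ {z', u'}) :
    StrongCausal z u z' u' := by
  -- `X` is infinite, being homeomorphic to the circle
  haveI hinf : Infinite X := by
    obtain ⟨e⟩ := M.circle
    haveI : Fact ((0:ℝ) < 1) := ⟨zero_lt_one⟩
    haveI : Infinite (Set.Ico (0:ℝ) (0+1)) := Set.Ico.infinite (by norm_num)
    haveI : Infinite (AddCircle (1:ℝ)) :=
      Infinite.of_injective (AddCircle.equivIco (1:ℝ) 0).symm
        (AddCircle.equivIco (1:ℝ) 0).symm.injective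
    exact Infinite.of_injective e.symm e.symm.toEquiv.injective
  -- choose a point `ω` distinct from the six given points
  obtain ⟨ω, hω⟩ := Infinite.exists_notMem_finset ({x, y, z, u, z', u'} : Finset X)
  simp only [Finset.mem_insert, Finset.mem_singleton, not_or] at hω
  obtain ⟨hωx, hωy, hωz, hωu, hωz', hωu'⟩ := hω
  have hf : scF M ω x y z = scF M ω x y u := scF_eq M hωx hωy hωz hωu hyz hyu hb
  have hf' : scF M ω x y z' = scF M ω x y u' := scF_eq M hωx hωy hωz' hωu' hyz' hyu' hb'
  have S1 := scF_sep M hωx hωy hωz hωu hxy hxz hxu hyz hyu hzu hf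
  have S2 := scF_sep M hωx hωy hωz' hωu' hxy hxz' hxu' hyz' hyu' hzu' hf'
  have hne1 : ¬(z = z' ∧ u = u') := by
    rintro ⟨rfl, rfl⟩; exact hne rfl
  have hne2 : ¬(z = u' ∧ u = z') := by
    rintro ⟨rfl, rfl⟩; exact hne (Set.pair_comm z u)
  have hne3 : ¬(u = z' ∧ z = u') := fun h => hne2 ⟨h.2, h.1⟩
  have hne4 : ¬(u = u' ∧ z = z') := fun h => hne1 ⟨h.2, h.1⟩
  rcases S1 with ⟨h1, h2⟩ | ⟨h1, h2⟩ <;> rcases S2 with ⟨h3, h4⟩ | ⟨h3, h4⟩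
  · exact scF_key M hωx hωy hωz hωu hωz' hωu' h1 h2 h3 h4 hf hf' hne1
  · exact sc_swap34 (scF_key M hωx hωy hωz hωu hωu' hωz' h1 h2 h3 h4 hf hf'.symm hne2)
  · exact sc_swap12 (scF_key M hωx hωy hωu hωz hωz' hωu' h1 h2 h3 h4 hf.symm hf' hne3)
  · exact sc_swap12 (sc_swap34
      (scF_key M hωx hωy hωu hωz hωu' hωz' h1 h2 h3 h4 hf.symm hf'.symm hne4))
end

section
/- Let M be a Möbius structure, and q=(a,b), q'=(a,b') harmonic pairs with common axis a=(x,y), b=(z,u), b'=(z',u'). Then the distance |qq'| = |ln( (|xz'||yz|)/(|xz||yz'|) )| is independent of the choice of semi-metric from M, and by harmonicity equals |ln((|xu'||yu|)/(|xu||yu'|))| = |ln((|xu'||yz|)/(|xz||yu'|))| = |ln((|xz'||yu|)/(|xu||yz'|))|. -/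
/-- A Möbius structure on a set `X`, presented by the family of its semi-metrics with
infinitely remote points: `D ω x y` is `|xy|` in the semi-metric with infinitely remote
point `ω` (defined for `x, y ≠ ω`); the semi-metrics are pairwise related by metric
inversion up to homothety (hence are Möbius equivalent). -/
structure MobiusFamily (X : Type*) where
  D : X → X → X → ℝ
  symm : ∀ ω x y, D ω x y = D ω y x
  refl : ∀ ω x, D ω x x = 0
  pos : ∀ ω x y, x ≠ y → x ≠ ω → y ≠ ω → 0 < D ω x y
  inversion : ∀ ω ω', ω ≠ ω' → ∃ c : ℝ, 0 < c ∧ ∀ x y, x ≠ ω → y ≠ ω → x ≠ ω' → y ≠ ω' →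
    D ω' x y = c * D ω x y / (D ω x ω' * D ω y ω')

/-- The 4-tuple `(x,y,z,u)` is harmonic: `|xz||yu| = |xu||yz|` in any semi-metric of the
Möbius structure. -/
def MobiusFamily.Harmonic {X : Type*} (F : MobiusFamily X) (x y z u : X) : Prop :=
  ∀ ω, ω ≠ x → ω ≠ y → ω ≠ z → ω ≠ u →
    F.D ω x z * F.D ω y u = F.D ω x u * F.D ω y z

/-! The expression inside the logarithm is the cross-ratio `|xz'||yz| / (|xz||yz'|)`. Passing to
another semi-metric multiplies each distance `|pq|` by `c / (|pω'||qω'|)`, and these factors cancel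
in a cross-ratio. Harmonicity of `(x,y,z,u)` says `|xz| / |yz| = |xu| / |yu|`, so `z` may be
replaced by `u` (and likewise `z'` by `u'`) without changing the cross-ratio. -/

namespace MobiusFamily

variable {X : Type*} (F : MobiusFamily X)

noncomputable def crossRatio (ω a b c d : X) : ℝ :=
  F.D ω a c * F.D ω b d / (F.D ω a d * F.D ω b c)

theorem crossRatio_swap (ω a b c d : X) :
    F.crossRatio ω a b d c = (F.crossRatio ω a b c d)⁻¹ :=
  (inv_div _ _).symm

theorem crossRatio_invariant {ω ω' a b c d : X}
    (ha : a ≠ ω) (hb : b ≠ ω) (hc : c ≠ ω) (hd : d ≠ ω)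
    (ha' : a ≠ ω') (hb' : b ≠ ω') (hc' : c ≠ ω') (hd' : d ≠ ω') :
    F.crossRatio ω a b c d = F.crossRatio ω' a b c d := by
  rcases eq_or_ne ω ω' with rfl | hne
  · rfl
  obtain ⟨k, hk, hinv⟩ := F.inversion ω ω' hne
  have hD : ∀ p, p ≠ ω → p ≠ ω' → F.D ω p ω' ≠ 0 := fun p h h' =>
    (F.pos ω p ω' h' h hne.symm).ne'
  have hDa := hD a ha ha'; have hDb := hD b hb hb'
  have hDc := hD c hc hc'; have hDd := hD d hd hd'
  unfold crossRatio
  rw [hinv a c ha hc ha' hc', hinv b d hb hd hb' hd', hinv a d ha hd ha' hd',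
    hinv b c hb hc hb' hc']
  field_simp

variable {F}

theorem Harmonic.crossRatio_replace_fourth {x y z u : X} (hq : F.Harmonic x y z u)
    {ω : X} (hx : ω ≠ x) (hy : ω ≠ y) (hz : ω ≠ z) (hu : ω ≠ u)
    (hxz : x ≠ z) (hxu : x ≠ u) (c : X) :
    F.crossRatio ω x y c z = F.crossRatio ω x y c u := by
  have hDxz := F.pos ω x z hxz hx.symm hz.symm
  have hDxu := F.pos ω x u hxu hx.symm hu.symm
  have hratio : F.D ω y z / F.D ω x z = F.D ω y u / F.D ω x u := by
    rw [div_eq_div_iff hDxz.ne' hDxu.ne']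
    linarith [hq ω hx hy hz hu]
  calc F.crossRatio ω x y c z = F.D ω x c / F.D ω y c * (F.D ω y z / F.D ω x z) := by
        unfold crossRatio; ring
    _ = F.D ω x c / F.D ω y c * (F.D ω y u / F.D ω x u) := by rw [hratio]
    _ = F.crossRatio ω x y c u := by unfold crossRatio; ring

theorem Harmonic.crossRatio_replace_third {x y z u : X} (hq : F.Harmonic x y z u)
    {ω : X} (hx : ω ≠ x) (hy : ω ≠ y) (hz : ω ≠ z) (hu : ω ≠ u)
    (hxz : x ≠ z) (hxu : x ≠ u) (d : X) :
    F.crossRatio ω x y z d = F.crossRatio ω x y u d := by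
  rw [← inv_inj, ← crossRatio_swap, ← crossRatio_swap,
    hq.crossRatio_replace_fourth hx hy hz hu hxz hxu]

end MobiusFamily

theorem stmt12_general {X : Type*} (F : MobiusFamily X) (x y z u z' u' : X)
    (hxz : x ≠ z) (hxu : x ≠ u)
    (hxz' : x ≠ z') (hxu' : x ≠ u')
    (hq : F.Harmonic x y z u) (hq' : F.Harmonic x y z' u') :
    ∀ ω ω' : X,
      ω ≠ x → ω ≠ y → ω ≠ z → ω ≠ u → ω ≠ z' → ω ≠ u' →
      ω' ≠ x → ω' ≠ y → ω' ≠ z → ω' ≠ u → ω' ≠ z' → ω' ≠ u' →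
      -- independence of the semi-metric:
      |Real.log (F.D ω x z' * F.D ω y z / (F.D ω x z * F.D ω y z'))| =
        |Real.log (F.D ω' x z' * F.D ω' y z / (F.D ω' x z * F.D ω' y z'))| ∧
      -- the equalities (eq:distance_different):
      |Real.log (F.D ω x z' * F.D ω y z / (F.D ω x z * F.D ω y z'))| =
        |Real.log (F.D ω x u' * F.D ω y u / (F.D ω x u * F.D ω y u'))| ∧
      |Real.log (F.D ω x z' * F.D ω y z / (F.D ω x z * F.D ω y z'))| =
        |Real.log (F.D ω x u' * F.D ω y z / (F.D ω x z * F.D ω y u'))| ∧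
      |Real.log (F.D ω x z' * F.D ω y z / (F.D ω x z * F.D ω y z'))| =
        |Real.log (F.D ω x z' * F.D ω y u / (F.D ω x u * F.D ω y z'))| := by
  intro ω ω' hωx hωy hωz hωu hωz' hωu' hω'x hω'y hω'z hω'u hω'z' hω'u'
  have h_base : F.crossRatio ω x y z' z = F.crossRatio ω' x y z' z :=
    F.crossRatio_invariant hωx.symm hωy.symm hωz'.symm hωz.symm
      hω'x.symm hω'y.symm hω'z'.symm hω'z.symm
  have h_third : F.crossRatio ω x y z' z = F.crossRatio ω x y u' z :=
    hq'.crossRatio_replace_third hωx hωy hωz' hωu' hxz' hxu' z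
  have h_fourth : ∀ c, F.crossRatio ω x y c z = F.crossRatio ω x y c u :=
    hq.crossRatio_replace_fourth hωx hωy hωz hωu hxz hxu
  exact ⟨congrArg (|Real.log ·|) h_base,
    congrArg (|Real.log ·|) (h_third.trans (h_fourth u')),
    congrArg (|Real.log ·|) h_third,
    congrArg (|Real.log ·|) (h_fourth z')⟩

/-- Let `M` be a Möbius structure, and `q = (a,b)`, `q' = (a,b')` harmonic
pairs with common axis `a = (x,y)`, `b = (z,u)`, `b' = (z',u')`. Then the distance
`|qq'| = |ln((|xz'||yz|)/(|xz||yz'|))|` is independent of the choice of semi-metric from `M`,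
and by harmonicity equals `|ln((|xu'||yu|)/(|xu||yu'|))| = |ln((|xu'||yz|)/(|xz||yu'|))|
= |ln((|xz'||yu|)/(|xu||yz'|))|`. -/
theorem stmt12 {X : Type*} (F : MobiusFamily X) (x y z u z' u' : X)
    (hxy : x ≠ y) (hxz : x ≠ z) (hxu : x ≠ u) (hyz : y ≠ z) (hyu : y ≠ u) (hzu : z ≠ u)
    (hxz' : x ≠ z') (hxu' : x ≠ u') (hyz' : y ≠ z') (hyu' : y ≠ u') (hzu' : z' ≠ u')
    (hq : F.Harmonic x y z u) (hq' : F.Harmonic x y z' u') :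
    ∀ ω ω' : X,
      ω ≠ x → ω ≠ y → ω ≠ z → ω ≠ u → ω ≠ z' → ω ≠ u' →
      ω' ≠ x → ω' ≠ y → ω' ≠ z → ω' ≠ u → ω' ≠ z' → ω' ≠ u' →
      -- independence of the semi-metric:
      |Real.log (F.D ω x z' * F.D ω y z / (F.D ω x z * F.D ω y z'))| =
        |Real.log (F.D ω' x z' * F.D ω' y z / (F.D ω' x z * F.D ω' y z'))| ∧
      -- the equalities (eq:distance_different):
      |Real.log (F.D ω x z' * F.D ω y z / (F.D ω x z * F.D ω y z'))| =
        |Real.log (F.D ω x u' * F.D ω y u / (F.D ω x u * F.D ω y u'))| ∧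
      |Real.log (F.D ω x z' * F.D ω y z / (F.D ω x z * F.D ω y z'))| =
        |Real.log (F.D ω x u' * F.D ω y z / (F.D ω x z * F.D ω y u'))| ∧
      |Real.log (F.D ω x z' * F.D ω y z / (F.D ω x z * F.D ω y z'))| =
        |Real.log (F.D ω x z' * F.D ω y u / (F.D ω x u * F.D ω y z'))| :=
  stmt12_general F x y z u z' u' hxz hxu hxz' hxu' hq hq'
end
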